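/- Let G be the group of block matrices [[I_{2g}, A],[0, π]] over ℤ/2 acting on (ℤ/2)^{2g} ⊕ Q, where A ranges over all (2g)×dim(Q) matrices and π ranges over the image of the S_{4g−4} coordinate-permutation action on Q = (ℤ/2)^{4g−4}_{even}/⟨(1,…,1)⟩. Then the number of G-orbits on (ℤ/2)^{2g} ⊕ Q is 2^{2g} + g − 1. -/

import Mathlib

/-!
An orbit is determined by an invariant of any representative `(s, x)`. If `x` is constant then
`A x = 0` for every admissible `A`, so `s` is an invariant. Otherwise only the Hamming weight `w`
of `x`, up to `w ↦ n - w`, survives: permutations preserve `w`, adding the all-ones vector turns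
it into `n - w`, vectors of equal weight differ by a permutation, and some `A` vanishing on the
all-ones vector sends the nonconstant `x` to any prescribed vector, so `s + A x` is arbitrary.
The classes `{w, n - w}` of even weights `0 < w < n` are indexed by `min w (n - w) / 2 - 1`,
which ranges over `Fin (n / 4)` when `n` is even.
-/

open Finset Function

theorem Quot.lift_bijective {α β : Type*} {r : α → α → Prop} (f : α → β)
    (hresp : ∀ a b, r a b → f a = f b) (hrel : ∀ a b, f a = f b → r a b) (hf : Surjective f) :
    Bijective (Quot.lift f hresp) := by
  refine ⟨fun a b hab => ?_, fun y => (hf y).elim fun a ha => ⟨Quot.mk r a, ha⟩⟩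
  induction a using Quot.ind
  induction b using Quot.ind
  exact Quot.sound (hrel _ _ hab)

theorem LinearMap.exists_apply_const_eq_zero_apply_eq {K ι M : Type*} [Field K] [AddCommGroup M]
    [Module K M] {x : ι → K} {i j : ι} (hij : x i ≠ x j) (v : M) :
    ∃ A : (ι → K) →ₗ[K] M, A (fun _ => 1) = 0 ∧ A x = v := by
  let φ : (ι → K) →ₗ[K] K :=
    (x i - x j)⁻¹ • (LinearMap.proj (R := K) (φ := fun _ => K) i - LinearMap.proj j)
  refine ⟨φ.smulRight v, ?_, ?_⟩
  · simp [φ]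
  · simp [φ, inv_mul_cancel₀ (sub_ne_zero.mpr hij)]

section Hamming

variable {ι : Type*} [Fintype ι]

theorem hammingNorm_eq_card_iff {β : ι → Type*} [∀ i, Zero (β i)] [∀ i, DecidableEq (β i)]
    {x : ∀ i, β i} : hammingNorm x = Fintype.card ι ↔ ∀ i, x i ≠ 0 := by
  simp [hammingNorm, ← card_univ, card_filter_eq_iff]

theorem exists_apply_ne_of_hammingNorm_ne {β : Type*} [Zero β] [DecidableEq β] {x : ι → β}
    (h0 : hammingNorm x ≠ 0) (hcard : hammingNorm x ≠ Fintype.card ι) : ∃ i j, x i ≠ x j := by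
  obtain ⟨i, hi⟩ := Function.ne_iff.mp (hammingNorm_ne_zero_iff.mp h0)
  obtain ⟨j, hj⟩ : ∃ j, x j = 0 := by
    by_contra! hj
    exact hcard (hammingNorm_eq_card_iff.mpr hj)
  exact ⟨i, j, by rwa [hj]⟩

theorem exists_hammingNorm_eq {β : Type*} [Zero β] [One β] [NeZero (1 : β)] [DecidableEq β]
    {m : ℕ} (hm : m ≤ Fintype.card ι) : ∃ x : ι → β, hammingNorm x = m := by
  classical
  obtain ⟨t, -, ht⟩ := exists_subset_card_eq (s := univ) hm
  exact ⟨fun i => if i ∈ t then 1 else 0, by simpa [hammingNorm] using ht⟩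

theorem hammingNorm_comp_perm {β : Type*} [Zero β] [DecidableEq β] (x : ι → β)
    (π : Equiv.Perm ι) : hammingNorm (x ∘ π) = hammingNorm x :=
  card_equiv π (by simp)

namespace ZMod

theorem sum_eq_hammingNorm (x : ι → ZMod 2) : ∑ i, x i = hammingNorm x := by
  rw [hammingNorm, card_filter, Nat.cast_sum]
  refine sum_congr rfl fun i _ => ?_
  generalize x i = a
  revert a
  decide

theorem eq_one_of_hammingNorm_eq_card {x : ι → ZMod 2} (h : hammingNorm x = Fintype.card ι) :
    x = fun _ => 1 := by
  have hone : ∀ a : ZMod 2, a ≠ 0 → a = 1 := by decide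
  exact funext fun i => hone _ (hammingNorm_eq_card_iff.mp h i)

theorem hammingNorm_add_one (x : ι → ZMod 2) :
    hammingNorm (x + fun _ => 1) = Fintype.card ι - hammingNorm x := by
  have hflip : ∀ a : ZMod 2, a + 1 ≠ 0 ↔ ¬a ≠ 0 := by decide
  rw [hammingNorm, hammingNorm, ← card_univ, ← card_filter_add_card_filter_not
    (s := univ) (fun i => x i ≠ 0)]
  simp only [Pi.add_apply, hflip]
  omega

theorem exists_perm_comp_eq_of_hammingNorm_eq {x y : ι → ZMod 2}
    (h : hammingNorm x = hammingNorm y) : ∃ π : Equiv.Perm ι, y = x ∘ π := by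
  classical
  obtain ⟨π, hπ⟩ := Equiv.Perm.exists_map_finset_eq {i | y i ≠ 0} {i | x i ≠ 0} h.symm
  refine ⟨π, funext fun i => ?_⟩
  have hsupp : x (π i) ≠ 0 ↔ y i ≠ 0 := by
    simpa using (Finset.ext_iff.mp hπ (π i)).symm
  have hbool : ∀ a b : ZMod 2, (a ≠ 0 ↔ b ≠ 0) → b = a := by decide
  exact hbool _ _ hsupp

theorem exists_perm_comp_add_const_iff {x y : ι → ZMod 2} :
    (∃ π : Equiv.Perm ι, ∃ c : ZMod 2, y = x ∘ π + fun _ => c) ↔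
      hammingNorm y = hammingNorm x ∨ hammingNorm y = Fintype.card ι - hammingNorm x := by
  constructor
  · rintro ⟨π, c, rfl⟩
    obtain rfl | rfl : c = 0 ∨ c = 1 := by revert c; decide
    · exact .inl (by rw [← Pi.zero_def, add_zero, hammingNorm_comp_perm])
    · exact .inr (by rw [hammingNorm_add_one, hammingNorm_comp_perm])
  · rintro (h | h)
    · obtain ⟨π, hπ⟩ := exists_perm_comp_eq_of_hammingNorm_eq h.symm
      exact ⟨π, 0, hπ.trans (add_zero _).symm⟩
    · have hle : hammingNorm x ≤ Fintype.card ι := hammingNorm_le_card_fintype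
      obtain ⟨π, hπ⟩ := exists_perm_comp_eq_of_hammingNorm_eq (x := x) (y := y + fun _ => 1)
        (by rw [hammingNorm_add_one]; omega)
      refine ⟨π, 1, ?_⟩
      rw [← hπ, add_assoc]
      ext i
      simp [show (1 : ZMod 2) + 1 = 0 from rfl]

end ZMod

theorem two_dvd_hammingNorm_of_sum_eq_zero {x : ι → ZMod 2} (hx : ∑ i, x i = 0) :
    2 ∣ hammingNorm x := by
  rwa [← ZMod.natCast_eq_zero_iff, ← ZMod.sum_eq_hammingNorm]

end Hamming

def orbitRel (ι V : Type*) [Fintype ι] [AddCommGroup V] [Module (ZMod 2) V]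
    (p q : V × {x : ι → ZMod 2 // ∑ i, x i = 0}) : Prop :=
  ∃ π : Equiv.Perm ι, ∃ c : ZMod 2, ∃ A : (ι → ZMod 2) →ₗ[ZMod 2] V,
    A (fun _ => 1) = 0 ∧
    (q.2 : ι → ZMod 2) = ((p.2 : ι → ZMod 2) ∘ π + fun _ => c) ∧
    q.1 = p.1 + A (p.2 : ι → ZMod 2)

section Orbits

variable {ι V : Type*} [Fintype ι]

def orbitInvariant (hn : Even (Fintype.card ι)) (p : V × {x : ι → ZMod 2 // ∑ i, x i = 0}) :
    V ⊕ Fin (Fintype.card ι / 4) :=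
  if h : hammingNorm (p.2 : ι → ZMod 2) = 0 ∨ hammingNorm (p.2 : ι → ZMod 2) = Fintype.card ι then
    .inl p.1
  else
    .inr ⟨min (hammingNorm (p.2 : ι → ZMod 2))
      (Fintype.card ι - hammingNorm (p.2 : ι → ZMod 2)) / 2 - 1, by
      have := two_dvd_hammingNorm_of_sum_eq_zero p.2.2
      have : hammingNorm (p.2 : ι → ZMod 2) ≤ Fintype.card ι := hammingNorm_le_card_fintype
      obtain ⟨k, hk⟩ := hn
      omega⟩

theorem orbitInvariant_surjective [Zero V] (hn : Even (Fintype.card ι)) :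
    Surjective (orbitInvariant (V := V) hn) := by
  rintro (s | ⟨k, hk⟩)
  · exact ⟨(s, ⟨0, by simp⟩), by simp [orbitInvariant]⟩
  · obtain ⟨x, hx⟩ := exists_hammingNorm_eq (ι := ι) (β := ZMod 2) (m := 2 * (k + 1)) (by omega)
    have hsum : ∑ i, x i = 0 := by
      rw [ZMod.sum_eq_hammingNorm, hx, ZMod.natCast_eq_zero_iff]
      exact dvd_mul_right 2 _
    refine ⟨(0, ⟨x, hsum⟩), ?_⟩
    obtain ⟨m, hm⟩ := hn
    unfold orbitInvariant
    rw [dif_neg (by simp only [hx]; omega)]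
    simp only [hx, Sum.inr.injEq, Fin.mk.injEq]
    omega

variable [AddCommGroup V] [Module (ZMod 2) V]

theorem orbitInvariant_eq_of_orbitRel (hn : Even (Fintype.card ι))
    {p q : V × {x : ι → ZMod 2 // ∑ i, x i = 0}} (h : orbitRel ι V p q) :
    orbitInvariant hn p = orbitInvariant hn q := by
  revert h
  rcases p with ⟨s, x, hx⟩
  rcases q with ⟨t, y, hy⟩
  rintro ⟨π, c, A, hA, hxy, rfl⟩
  have hw : hammingNorm y = hammingNorm x ∨ hammingNorm y = Fintype.card ι - hammingNorm x :=
    ZMod.exists_perm_comp_add_const_iff.mp ⟨π, c, hxy⟩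
  have hle : hammingNorm x ≤ Fintype.card ι := hammingNorm_le_card_fintype
  simp only [orbitInvariant]
  by_cases hx : hammingNorm x = 0 ∨ hammingNorm x = Fintype.card ι
  · have hAx : A x = 0 := by
      rcases hx with h0 | hcard
      · rw [hammingNorm_eq_zero.mp h0, map_zero]
      · rw [ZMod.eq_one_of_hammingNorm_eq_card hcard, hA]
    rw [dif_pos hx, dif_pos (by omega), hAx, add_zero]
  · rw [dif_neg hx, dif_neg (by omega)]
    congr 2
    omega

theorem orbitRel_of_orbitInvariant_eq (hn : Even (Fintype.card ι))
    {p q : V × {x : ι → ZMod 2 // ∑ i, x i = 0}} (h : orbitInvariant hn p = orbitInvariant hn q) :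
    orbitRel ι V p q := by
  rcases p with ⟨s, x, hx⟩
  rcases q with ⟨t, y, hy⟩
  have hx2 := two_dvd_hammingNorm_of_sum_eq_zero hx
  have hy2 := two_dvd_hammingNorm_of_sum_eq_zero hy
  have hxle : hammingNorm x ≤ Fintype.card ι := hammingNorm_le_card_fintype
  have hyle : hammingNorm y ≤ Fintype.card ι := hammingNorm_le_card_fintype
  obtain ⟨k, hk⟩ := hn
  simp only [orbitInvariant] at h
  obtain ⟨hw, A, hA1, hAx⟩ : (hammingNorm y = hammingNorm x ∨
      hammingNorm y = Fintype.card ι - hammingNorm x) ∧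
      ∃ A : (ι → ZMod 2) →ₗ[ZMod 2] V, A (fun _ => 1) = 0 ∧ A x = t - s := by
    by_cases hxc : hammingNorm x = 0 ∨ hammingNorm x = Fintype.card ι <;>
      by_cases hyc : hammingNorm y = 0 ∨ hammingNorm y = Fintype.card ι
    · rw [dif_pos hxc, dif_pos hyc, Sum.inl.injEq] at h
      exact ⟨by omega, 0, rfl, by rw [h, sub_self, LinearMap.zero_apply]⟩
    · rw [dif_pos hxc, dif_neg hyc] at h
      exact absurd h Sum.inl_ne_inr
    · rw [dif_neg hxc, dif_pos hyc] at h
      exact absurd h Sum.inr_ne_inl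
    · rw [dif_neg hxc, dif_neg hyc, Sum.inr.injEq, Fin.mk.injEq] at h
      obtain ⟨i, j, hij⟩ := exists_apply_ne_of_hammingNorm_ne (x := x) (by omega) (by omega)
      exact ⟨by omega, LinearMap.exists_apply_const_eq_zero_apply_eq hij _⟩
  obtain ⟨π, c, hxy⟩ := ZMod.exists_perm_comp_add_const_iff.mpr hw
  exact ⟨π, c, A, hA1, hxy, by rw [hAx, add_sub_cancel]⟩

theorem card_quot_orbitRel [Finite V] (hn : Even (Fintype.card ι)) :
    Nat.card (Quot (orbitRel ι V)) = Nat.card V + Fintype.card ι / 4 := by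
  have hbij := Quot.lift_bijective (orbitInvariant (V := V) hn)
    (fun _ _ => orbitInvariant_eq_of_orbitRel hn) (fun _ _ => orbitRel_of_orbitInvariant_eq hn)
    (orbitInvariant_surjective hn)
  rw [Nat.card_congr (Equiv.ofBijective _ hbij), Nat.card_sum,
    Nat.card_eq_fintype_card (α := Fin _), Fintype.card_fin]

end Orbits

/-- The group of block matrices [[I_{2g}, A],[0, π]] over ℤ/2 acts on
(ℤ/2)^{2g} ⊕ Q, where Q is the quotient of the even-weight subspace of (ℤ/2)^{4g−4}
by the all-ones vector, by (s,x) ↦ (s + Ax, πx); here A ranges over all linear maps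
Q → (ℤ/2)^{2g} (linear maps on (ℤ/2)^{4g−4} annihilating the all-ones vector) and π
over the image of the S_{4g−4} coordinate-permutation action.  The number of orbits
is 2^{2g} + g − 1.  Orbits are encoded as classes of the corresponding relation on
pairs (s, x) with x of even weight. -/
theorem stmt12 (g : ℕ) (hg : 3 ≤ g) :
    Nat.card (Quot (fun p q :
        (Fin (2 * g) → ZMod 2) × {x : Fin (4 * g - 4) → ZMod 2 // ∑ i, x i = 0} =>
      ∃ π : Equiv.Perm (Fin (4 * g - 4)), ∃ c : ZMod 2,
        ∃ A : (Fin (4 * g - 4) → ZMod 2) →ₗ[ZMod 2] (Fin (2 * g) → ZMod 2),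
          A (fun _ => 1) = 0 ∧
          (q.2 : Fin (4 * g - 4) → ZMod 2) =
            ((p.2 : Fin (4 * g - 4) → ZMod 2) ∘ π + fun _ => c) ∧
          q.1 = p.1 + A (p.2 : Fin (4 * g - 4) → ZMod 2))) =
      2 ^ (2 * g) + g - 1 := by
  have hn : Even (Fintype.card (Fin (4 * g - 4))) := ⟨2 * g - 2, by rw [Fintype.card_fin]; omega⟩
  refine (card_quot_orbitRel hn).trans ?_
  simp only [Nat.card_eq_fintype_card, Fintype.card_fun, Fintype.card_fin, ZMod.card]
  generalize 2 ^ (2 * g) = N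
  omega
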